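/- arXiv:1207.6328 — 3 statements merged into one kernel-verified Lean document; each statement's English description precedes it below -/
import Mathlib

section
/- Let A ∈ ℝ^{N×N} be a positive column-stochastic matrix. Then every eigenvalue λ ∈ ℂ of A with λ ≠ 1 satisfies |λ| < 1. -/
/-!
Since the columns of `A` sum to one, `1ᵀ A = 1ᵀ`, so an eigenvector `v` for an eigenvalue
`λ ≠ 1` has coordinate sum zero; a nonzero vector with zero sum has two coordinates that do not
point in the same direction. As every entry of `A` is positive, the triangle inequality is then
strict in every row of `A v = λ v`, and summing over the rows (again using the column sums) gives
`|λ| ‖v‖₁ < ‖v‖₁`.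
-/

open Finset Matrix

section SameRay

variable {R M : Type*} [Field R] [LinearOrder R] [IsStrictOrderedRing R]
  [AddCommGroup M] [Module R M]

theorem sameRay_pos_smul_smul_iff {a b : R} (ha : 0 < a) (hb : 0 < b) {x y : M} :
    SameRay R (a • x) (b • y) ↔ SameRay R x y := by
  refine ⟨fun h => ?_, fun h => (h.pos_smul_left ha).pos_smul_right hb⟩
  simpa [smul_smul, ha.ne', hb.ne'] using
    (h.pos_smul_left (inv_pos.2 ha)).pos_smul_right (inv_pos.2 hb)

theorem exists_not_sameRay_of_sum_eq_zero {ι : Type*} [Fintype ι] [DecidableEq ι]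
    {v : ι → M} (hsum : ∑ k, v k = 0) {j : ι} (hj : v j ≠ 0) :
    ∃ k, ¬SameRay R (v j) (v k) := by
  by_contra! hray
  have hrest : SameRay R (v j) (∑ k ∈ univ.erase j, v k) :=
    Finset.sum_induction _ _ (fun _ _ => SameRay.add_right) (SameRay.zero_right _)
      fun k _ => hray k
  rw [eq_neg_of_add_eq_zero_right ((add_sum_erase _ _ (mem_univ j)).trans hsum)] at hrest
  exact hj (eq_zero_of_sameRay_self_neg hrest)

end SameRay

section StrictTriangle

variable {ι E : Type*} [NormedAddCommGroup E] [NormedSpace ℝ E] [StrictConvexSpace ℝ E]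

theorem norm_sum_lt_sum_norm_of_not_sameRay [DecidableEq ι] {s : Finset ι} {z : ι → E}
    {i j : ι} (hi : i ∈ s) (hj : j ∈ s) (hij : ¬SameRay ℝ (z i) (z j)) :
    ‖∑ k ∈ s, z k‖ < ∑ k ∈ s, ‖z k‖ := by
  have hne : j ≠ i := by rintro rfl; exact hij SameRay.rfl
  have hj' : j ∈ s.erase i := mem_erase.2 ⟨hne, hj⟩
  rw [← add_sum_erase _ _ hi, ← add_sum_erase _ _ hj', ← add_sum_erase _ _ hi,
    ← add_sum_erase _ _ hj', ← add_assoc, ← add_assoc]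
  calc ‖z i + z j + ∑ k ∈ (s.erase i).erase j, z k‖
      ≤ ‖z i + z j‖ + ‖∑ k ∈ (s.erase i).erase j, z k‖ := norm_add_le _ _
    _ < ‖z i‖ + ‖z j‖ + ∑ k ∈ (s.erase i).erase j, ‖z k‖ :=
      add_lt_add_of_lt_of_le (not_sameRay_iff_norm_add_lt.1 hij) (norm_sum_le _ _)

variable [Fintype ι] [DecidableEq ι]

theorem sum_norm_sum_smul_lt_sum_norm_of_not_sameRay {A : Matrix ι ι ℝ}
    (hA0 : ∀ i j, 0 < A i j) (hA1 : ∀ j, ∑ i, A i j = 1) {v : ι → E} {j k : ι}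
    (hjk : ¬SameRay ℝ (v j) (v k)) :
    ∑ i, ‖∑ l, A i l • v l‖ < ∑ l, ‖v l‖ := by
  have hrow : ∀ i, ‖∑ l, A i l • v l‖ < ∑ l, A i l * ‖v l‖ := fun i => by
    simpa only [norm_smul, Real.norm_of_nonneg (hA0 i _).le] using
      norm_sum_lt_sum_norm_of_not_sameRay (z := fun l => A i l • v l) (mem_univ j) (mem_univ k)
        ((sameRay_pos_smul_smul_iff (hA0 i j) (hA0 i k)).not.2 hjk)
  calc ∑ i, ‖∑ l, A i l • v l‖ < ∑ i, ∑ l, A i l * ‖v l‖ :=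
        sum_lt_sum_of_nonempty ⟨j, mem_univ j⟩ fun i _ => hrow i
    _ = ∑ l, ‖v l‖ := by
        rw [sum_comm]
        simp only [← sum_mul, hA1, one_mul]

end StrictTriangle

section ColumnSums

variable {n : Type*} [Fintype n]

theorem sum_mulVec_of_sum_col_eq_one {R : Type*} [NonAssocSemiring R] {M : Matrix n n R}
    (hM : ∀ j, ∑ i, M i j = 1) (x : n → R) : ∑ i, (M *ᵥ x) i = ∑ i, x i := by
  simp only [mulVec, dotProduct]
  rw [sum_comm]
  simp only [← sum_mul, hM, one_mul]

theorem sum_eq_zero_of_mulVec_eq_smul {K : Type*} [Field K] {M : Matrix n n K}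
    (hM : ∀ j, ∑ i, M i j = 1) {lam : K} (hlam : lam ≠ 1) {v : n → K}
    (hv : M *ᵥ v = lam • v) :
    ∑ i, v i = 0 := by
  have h := sum_mulVec_of_sum_col_eq_one hM v
  rw [hv] at h
  simp only [Pi.smul_apply, smul_eq_mul, ← mul_sum] at h
  exact (mul_eq_zero.1 (by linear_combination h : (lam - 1) * ∑ i, v i = 0)).resolve_left
    (sub_ne_zero.2 hlam)

end ColumnSums

theorem mulVec_map_ofReal_apply {n : Type*} [Fintype n] (A : Matrix n n ℝ) (v : n → ℂ)
    (i : n) :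
    (A.map (fun x : ℝ => (x : ℂ)) *ᵥ v) i = ∑ j, A i j • v j := by
  simp only [mulVec, dotProduct, map_apply, Complex.real_smul]

theorem stmt4_general (N : ℕ) (A : Matrix (Fin N) (Fin N) ℝ)
    (hA0 : ∀ i j, 0 < A i j) (hA1 : ∀ j, ∑ i, A i j = 1)
    (lam : ℂ) (hlam : lam ≠ 1)
    (v : Fin N → ℂ) (hv : v ≠ 0)
    (heig : (A.map (fun x : ℝ => (x : ℂ))) *ᵥ v = lam • v) :
    ‖lam‖ < 1 := by
  have hA1' : ∀ j, ∑ i, A.map (fun x : ℝ => (x : ℂ)) i j = 1 := fun j => by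
    simp only [map_apply, ← Complex.ofReal_sum, hA1, Complex.ofReal_one]
  have hsum := sum_eq_zero_of_mulVec_eq_smul hA1' hlam heig
  obtain ⟨j, hj⟩ := Function.ne_iff.1 hv
  obtain ⟨k, hjk⟩ := exists_not_sameRay_of_sum_eq_zero (R := ℝ) hsum hj
  have hpos : 0 < ∑ l, ‖v l‖ :=
    sum_pos' (fun l _ => norm_nonneg _) ⟨j, mem_univ j, norm_pos_iff.2 hj⟩
  have hcontract := sum_norm_sum_smul_lt_sum_norm_of_not_sameRay hA0 hA1 hjk
  simp only [← mulVec_map_ofReal_apply, heig, Pi.smul_apply, norm_smul, ← mul_sum] at hcontract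
  exact (mul_lt_iff_lt_one_left hpos).1 hcontract

theorem stmt4 (N : ℕ) (hN : 1 ≤ N) (A : Matrix (Fin N) (Fin N) ℝ)
    (hA0 : ∀ i j, 0 < A i j) (hA1 : ∀ j, ∑ i, A i j = 1)
    (lam : ℂ) (hlam : lam ≠ 1)
    (v : Fin N → ℂ) (hv : v ≠ 0)
    (heig : (A.map (fun x : ℝ => (x : ℂ))) *ᵥ v = lam • v) :
    ‖lam‖ < 1 :=
  stmt4_general N A hA0 hA1 lam hlam v hv heig
end

section
/- Let L ∈ ℝ^{N×N} be a matrix with entries in {0,1}, L ≠ 0, and let L̂ ∈ ℝ^{(N+1)×(N+1)} be the matrix obtained by bordering L with a first row (0, eᵀ) and first column (0, e)ᵀ appended to L, i.e., L̂_{00} = 0, L̂_{0j} = 1 and L̂_{j0} = 1 for j = 1,…,N, and L̂_{ij} = L_{ij} for i,j ≥ 1. Define F̂ = diag(N, 1+f_1, …, 1+f_N) where f_j = Σ_i L_{ij}, and Ŝ = L̂ F̂^{-1}. Then all entries of Ŝ⁴ are strictly positive. -/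
open Finset Matrix

lemma entry_mul_nonneg' {n : ℕ} (A B : Matrix (Fin n) (Fin n) ℝ)
    (hA : ∀ i j, 0 ≤ A i j) (hB : ∀ i j, 0 ≤ B i j) :
    ∀ i j, 0 ≤ (A * B) i j := by
  intro i j
  rw [Matrix.mul_apply]
  exact Finset.sum_nonneg fun k _ => mul_nonneg (hA i k) (hB k j)

lemma entry_mul_pos' {n : ℕ} (A B : Matrix (Fin n) (Fin n) ℝ)
    (hA : ∀ i j, 0 ≤ A i j) (hB : ∀ i j, 0 ≤ B i j)
    (i j k : Fin n) (h1 : 0 < A i k) (h2 : 0 < B k j) : 0 < (A * B) i j := by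
  rw [Matrix.mul_apply]
  exact Finset.sum_pos' (fun l _ => mul_nonneg (hA i l) (hB l j))
    ⟨k, Finset.mem_univ k, mul_pos h1 h2⟩

theorem stmt5 (N : ℕ) (hN : 1 ≤ N) (L : Matrix (Fin N) (Fin N) ℝ)
    (hL01 : ∀ i j, L i j = 0 ∨ L i j = 1) (hLne : L ≠ 0)
    (Lhat : Matrix (Fin (N + 1)) (Fin (N + 1)) ℝ)
    (h00 : Lhat 0 0 = 0)
    (h0r : ∀ j : Fin N, Lhat 0 j.succ = 1)
    (h0c : ∀ j : Fin N, Lhat j.succ 0 = 1)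
    (hin : ∀ i j : Fin N, Lhat i.succ j.succ = L i j)
    (g : Fin (N + 1) → ℝ)
    (hg0 : g 0 = N)
    (hgs : ∀ j : Fin N, g j.succ = 1 + ∑ i, L i j)
    (Shat : Matrix (Fin (N + 1)) (Fin (N + 1)) ℝ)
    (hShat : Shat = Lhat * (Matrix.diagonal g)⁻¹) :
    ∀ i j, 0 < (Shat ^ 4) i j := by
  have hLnn : ∀ i j, 0 ≤ L i j := by
    intro i j; rcases hL01 i j with h | h <;> rw [h] <;> norm_num
  have hgpos : ∀ j, 0 < g j := by
    intro j
    induction j using Fin.cases with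
    | zero =>
        rw [hg0]
        exact_mod_cast Nat.lt_of_lt_of_le Nat.zero_lt_one hN
    | succ t =>
        rw [hgs]
        have : 0 ≤ ∑ i, L i t := Finset.sum_nonneg fun i _ => hLnn i t
        linarith
  have hdiag : (Matrix.diagonal g)⁻¹ = Matrix.diagonal (fun j => (g j)⁻¹) := by
    apply Matrix.inv_eq_right_inv
    rw [Matrix.diagonal_mul_diagonal]
    ext i j
    by_cases h : i = j
    · subst h
      simp [Matrix.diagonal_apply_eq, mul_inv_cancel₀ (hgpos i).ne']
    · simp [Matrix.diagonal_apply_ne _ h, Matrix.one_apply_ne h]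
  have hS : ∀ i j, Shat i j = Lhat i j * (g j)⁻¹ := by
    intro i j
    rw [hShat, hdiag, Matrix.mul_diagonal]
  have hLhnn : ∀ i j, 0 ≤ Lhat i j := by
    intro i j
    induction i using Fin.cases with
    | zero =>
        induction j using Fin.cases with
        | zero => rw [h00]
        | succ s => rw [h0r]; norm_num
    | succ t =>
        induction j using Fin.cases with
        | zero => rw [h0c]; norm_num
        | succ s => rw [hin]; exact hLnn t s
  have hSnn : ∀ i j, 0 ≤ Shat i j := fun i j => by
    rw [hS]; exact mul_nonneg (hLhnn i j) (inv_nonneg.mpr (hgpos j).le)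
  have hSpos : ∀ i j, 0 < Lhat i j → 0 < Shat i j := fun i j h => by
    rw [hS]; exact mul_pos h (inv_pos.mpr (hgpos j))
  obtain ⟨p, q, hpq⟩ : ∃ p q, L p q = 1 := by
    by_contra h
    push_neg at h
    apply hLne
    ext a b
    rcases hL01 a b with h0 | h1
    · simpa using h0
    · exact absurd h1 (h a b)
  -- basic positive entries of Shat
  have A1 : ∀ t : Fin N, 0 < Shat t.succ 0 := fun t =>
    hSpos _ _ (by rw [h0c]; norm_num)
  have A2 : ∀ t : Fin N, 0 < Shat 0 t.succ := fun t =>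
    hSpos _ _ (by rw [h0r]; norm_num)
  have A3 : 0 < Shat p.succ q.succ :=
    hSpos _ _ (by rw [hin, hpq]; norm_num)
  have h4 : Shat ^ 4 = ((Shat * Shat) * Shat) * Shat := by
    rw [pow_succ, pow_succ, pow_succ, pow_one]
  have h2nn : ∀ i j, 0 ≤ (Shat * Shat) i j := entry_mul_nonneg' _ _ hSnn hSnn
  have h3nn : ∀ i j, 0 ≤ ((Shat * Shat) * Shat) i j :=
    entry_mul_nonneg' _ _ h2nn hSnn
  intro i j
  rw [h4]
  induction i using Fin.cases with
  | zero =>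
      induction j using Fin.cases with
      | zero =>
          exact entry_mul_pos' _ _ h3nn hSnn _ _ p.succ
            (entry_mul_pos' _ _ h2nn hSnn _ _ 0
              (entry_mul_pos' _ _ hSnn hSnn _ _ p.succ (A2 p) (A1 p)) (A2 p))
            (A1 p)
      | succ s =>
          exact entry_mul_pos' _ _ h3nn hSnn _ _ 0
            (entry_mul_pos' _ _ h2nn hSnn _ _ q.succ
              (entry_mul_pos' _ _ hSnn hSnn _ _ p.succ (A2 p) A3) (A1 q))
            (A2 s)
  | succ t =>
      induction j using Fin.cases with
      | zero =>
          exact entry_mul_pos' _ _ h3nn hSnn _ _ q.succ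
            (entry_mul_pos' _ _ h2nn hSnn _ _ p.succ
              (entry_mul_pos' _ _ hSnn hSnn _ _ 0 (A1 t) (A2 p)) A3)
            (A1 q)
      | succ s =>
          exact entry_mul_pos' _ _ h3nn hSnn _ _ 0
            (entry_mul_pos' _ _ h2nn hSnn _ _ t.succ
              (entry_mul_pos' _ _ hSnn hSnn _ _ 0 (A1 t) (A2 t)) (A1 t))
            (A2 s)
end

section
/- With L̂ as in the dummy-paper construction (L̂_{00}=0, L̂_{0j}=L̂_{j0}=1 for j≥1, L̂_{ij}=L_{ij} for i,j≥1, L ≠ 0 a 0-1 matrix), every entry of L̂⁴ is strictly positive; equivalently, in the directed graph on nodes {0,…,N} whose adjacency relation is given by L̂ᵀ, there is a walk of length exactly 4 between any ordered pair of nodes. -/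
open Finset Matrix

theorem stmt6 (N : ℕ) (hN : 1 ≤ N) (L : Matrix (Fin N) (Fin N) ℝ)
    (hL01 : ∀ i j, L i j = 0 ∨ L i j = 1) (hLne : L ≠ 0)
    (Lhat : Matrix (Fin (N + 1)) (Fin (N + 1)) ℝ)
    (h00 : Lhat 0 0 = 0)
    (h0r : ∀ j : Fin N, Lhat 0 j.succ = 1)
    (h0c : ∀ j : Fin N, Lhat j.succ 0 = 1)
    (hin : ∀ i j : Fin N, Lhat i.succ j.succ = L i j) :
    ∀ i j, 0 < (Lhat ^ 4) i j := by
  have hnn : ∀ i j, 0 ≤ Lhat i j := by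
    intro i j
    induction i using Fin.cases with
    | zero =>
      induction j using Fin.cases with
      | zero => rw [h00]
      | succ j => rw [h0r]; norm_num
    | succ i =>
      induction j using Fin.cases with
      | zero => rw [h0c]; norm_num
      | succ j => rw [hin]; rcases hL01 i j with h | h <;> rw [h] <;> norm_num
  obtain ⟨a, b, hab⟩ : ∃ a b, L a b = 1 := by
    by_contra h
    push_neg at h
    apply hLne
    ext a b
    rcases hL01 a b with h' | h'
    · simpa using h'
    · exact absurd h' (h a b)
  have step : ∀ (A B : Matrix (Fin (N+1)) (Fin (N+1)) ℝ),
      (∀ i j, 0 ≤ A i j) → (∀ i j, 0 ≤ B i j) →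
      ∀ i j k, 0 < A i k → 0 < B k j → 0 < (A * B) i j := by
    intro A B hA hB i j k hAk hBk
    rw [Matrix.mul_apply]
    exact Finset.sum_pos' (fun l _ => mul_nonneg (hA i l) (hB l j))
      ⟨k, Finset.mem_univ k, mul_pos hAk hBk⟩
  have mulnn : ∀ (A B : Matrix (Fin (N+1)) (Fin (N+1)) ℝ),
      (∀ i j, 0 ≤ A i j) → (∀ i j, 0 ≤ B i j) → ∀ i j, 0 ≤ (A * B) i j := by
    intro A B hA hB i j
    rw [Matrix.mul_apply]
    exact Finset.sum_nonneg fun l _ => mul_nonneg (hA i l) (hB l j)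
  have h4 : Lhat ^ 4 = Lhat * Lhat * Lhat * Lhat := by
    rw [pow_succ, pow_succ, pow_succ, pow_one]
  have chain : ∀ i k1 k2 k3 j, 0 < Lhat i k1 → 0 < Lhat k1 k2 → 0 < Lhat k2 k3 →
      0 < Lhat k3 j → 0 < (Lhat ^ 4) i j := by
    intro i k1 k2 k3 j h1 h2 h3 h4'
    rw [h4]
    exact step _ _ (mulnn _ _ (mulnn _ _ hnn hnn) hnn) hnn i j k3
      (step _ _ (mulnn _ _ hnn hnn) hnn i k3 k2
        (step _ _ hnn hnn i k2 k1 h1 h2) h3) h4'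
  have e0s : ∀ j : Fin N, 0 < Lhat 0 j.succ := fun j => by rw [h0r]; norm_num
  have es0 : ∀ j : Fin N, 0 < Lhat j.succ 0 := fun j => by rw [h0c]; norm_num
  have eab : 0 < Lhat a.succ b.succ := by rw [hin, hab]; norm_num
  intro i j
  induction i using Fin.cases with
  | zero =>
    induction j using Fin.cases with
    | zero => exact chain 0 a.succ 0 a.succ 0 (e0s a) (es0 a) (e0s a) (es0 a)
    | succ j => exact chain 0 a.succ b.succ 0 j.succ (e0s a) eab (es0 b) (e0s j)
  | succ i =>
    induction j using Fin.cases with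
    | zero => exact chain i.succ 0 a.succ b.succ 0 (es0 i) (e0s a) eab (es0 b)
    | succ j => exact chain i.succ 0 a.succ 0 j.succ (es0 i) (e0s a) (es0 a) (e0s j)
end
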